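/- Let G be the complete graph on q ≥ 2 vertices with pairwise distinct positive edge weights and let T be its (unique) maximum spanning tree. For every ε ≥ 0, the cycle rank of the threshold graph G_ε satisfies β₁(ε) = #{edges of G not in T with weight > ε}, where β₁(ε) = E(ε) − q + β₀(ε), E(ε) is the number of edges of G_ε and β₀(ε) its number of connected components. -/

import Mathlib

/-- The threshold graph of a weighted graph `H`: keep only edges of `H` whose
weight strictly exceeds `ε`. -/
def thresholdOf {q : ℕ} (H : SimpleGraph (Fin q)) (w : Sym2 (Fin q) → ℝ) (ε : ℝ) :
    SimpleGraph (Fin q) where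
  Adj i j := H.Adj i j ∧ ε < w s(i, j)
  symm := ⟨fun i j h => ⟨h.1.symm, by rw [Sym2.eq_swap]; exact h.2⟩⟩
  loopless := ⟨fun i h => H.loopless.irrefl i h.1⟩

/-- The threshold graph of the complete weighted graph on `Fin q`. -/
def thresholdGraph {q : ℕ} (w : Sym2 (Fin q) → ℝ) (ε : ℝ) : SimpleGraph (Fin q) :=
  thresholdOf ⊤ w ε

/-- `β₀(ε)`: the number of connected components of the threshold graph. -/
noncomputable def betti0 {q : ℕ} (w : Sym2 (Fin q) → ℝ) (ε : ℝ) : ℕ :=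
  Nat.card (thresholdGraph w ε).ConnectedComponent

/-- `E(ε)`: the number of edges of the threshold graph. -/
noncomputable def numEdges {q : ℕ} (w : Sym2 (Fin q) → ℝ) (ε : ℝ) : ℕ :=
  (thresholdGraph w ε).edgeSet.ncard

/-- `β₁(ε) = E(ε) − q + β₀(ε)`: the cycle rank of the threshold graph. -/
noncomputable def betti1 {q : ℕ} (w : Sym2 (Fin q) → ℝ) (ε : ℝ) : ℤ :=
  (numEdges w ε : ℤ) - (q : ℤ) + (betti0 w ε : ℤ)

/-- A point `ε` is a jump point of `f` if `f` is not constant on any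
neighborhood of `ε`. -/
def IsJump {β : Type*} (f : ℝ → β) (ε : ℝ) : Prop :=
  ∀ δ > 0, ∃ x : ℝ, |x - ε| < δ ∧ f x ≠ f ε

/-- `T` is a maximum spanning tree of `G` w.r.t. the weights `w`: a spanning tree
of `G` whose total edge weight is maximal among all spanning trees of `G`. -/
def IsMaxSpanningTree {V : Type*} (G : SimpleGraph V) (w : Sym2 V → ℝ)
    (T : SimpleGraph V) : Prop :=
  T ≤ G ∧ T.IsTree ∧
    ∀ T' : SimpleGraph V, T' ≤ G → T'.IsTree →
      (∑ᶠ e ∈ T'.edgeSet, w e) ≤ ∑ᶠ e ∈ T.edgeSet, w e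

/-!
Cycle property: if `s(u, v)` is not in the maximum spanning tree `T`, every edge on the `T`-path
from `u` to `v` weighs at least `w s(u, v)`, since otherwise exchanging it for `s(u, v)` would
give a heavier spanning tree. Hence the endpoints of every edge of `G_ε` are joined by a path in
the forest `T_ε` of tree edges heavier than `ε`, so `G_ε` and `T_ε` have the same components.
A forest satisfies `β₀ + E = q`, and the edges of `G_ε` are those of `T_ε` together with the
non-tree edges heavier than `ε`.
-/

namespace SimpleGraph

variable {V : Type*} {G H : SimpleGraph V}

lemma Reachable.of_forall_adj_reachable (h : ∀ ⦃x y⦄, G.Adj x y → H.Reachable x y) {x y : V}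
    (hxy : G.Reachable x y) : H.Reachable x y := by
  obtain ⟨p⟩ := hxy
  induction p with
  | nil => rfl
  | cons hadj _ ih => exact (h hadj).trans ih

lemma Reachable.deleteEdges_or {a b x y : V} (hxy : G.Reachable x y) :
    (G.deleteEdges {s(a, b)}).Reachable x y ∨ (G.deleteEdges {s(a, b)}).Reachable x a ∨
      (G.deleteEdges {s(a, b)}).Reachable x b := by
  obtain ⟨p⟩ := hxy
  induction p with
  | nil => exact .inl .rfl
  | @cons x c _ hadj _ ih =>
    by_cases he : s(x, c) = s(a, b)
    · obtain ⟨rfl, -⟩ | ⟨rfl, -⟩ := Sym2.eq_iff.1 he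
      exacts [.inr (.inl .rfl), .inr (.inr .rfl)]
    · have hadj' : (G.deleteEdges {s(a, b)}).Adj x c := by simpa [he] using hadj
      exact ih.imp hadj'.reachable.trans (Or.imp hadj'.reachable.trans hadj'.reachable.trans)

lemma IsBridge.card_connectedComponent_deleteEdges [Finite V] {a b : V} (hab : G.Adj a b)
    (hbr : G.IsBridge s(a, b)) :
    Nat.card (G.deleteEdges {s(a, b)}).ConnectedComponent = Nat.card G.ConnectedComponent + 1 := by
  set G' := G.deleteEdges {s(a, b)}
  set φ : G'.ConnectedComponent → G.ConnectedComponent :=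
    ConnectedComponent.map (Hom.ofLE (deleteEdges_le _))
  have hφ (x : V) : φ (G'.connectedComponentMk x) = G.connectedComponentMk x := rfl
  set s := Set.univ \ {G'.connectedComponentMk b}
  have hinj : s.InjOn φ := by
    intro c hx d hy hxy
    induction c, d using ConnectedComponent.ind₂ with | _ x y => ?_
    simp only [s, Set.mem_sdiff, Set.mem_univ, Set.mem_singleton_iff, true_and,
      ConnectedComponent.eq] at hx hy
    have hxy : G.Reachable x y := ConnectedComponent.exact hxy
    rw [ConnectedComponent.eq]
    rcases hxy.deleteEdges_or with h | hxa | hxb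
    · exact h
    · rcases hxy.symm.deleteEdges_or with h | hya | hyb
      exacts [h.symm, hxa.trans hya.symm, absurd hyb hy]
    · exact absurd hxb hx
  have hsurj : φ '' s = Set.univ := by
    refine Set.eq_univ_of_forall (ConnectedComponent.ind fun x => ?_)
    by_cases hx : G'.connectedComponentMk x = G'.connectedComponentMk b
    · refine ⟨G'.connectedComponentMk a,
        by simpa [s, ConnectedComponent.eq] using isBridge_iff.1 hbr, ?_⟩
      rw [← hφ x, hx, hφ, hφ]
      exact ConnectedComponent.sound hab.reachable
    · exact ⟨_, by simpa [s] using hx, hφ x⟩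
  calc Nat.card G'.ConnectedComponent = s.ncard + 1 := by
        rw [Set.ncard_sdiff_singleton_add_one (Set.mem_univ _), Set.ncard_univ]
    _ = Nat.card G.ConnectedComponent + 1 := by
        rw [← hinj.ncard_image, hsurj, Set.ncard_univ]

theorem IsAcyclic.card_connectedComponent_add_ncard_edgeSet [Finite V] (hG : G.IsAcyclic) :
    Nat.card G.ConnectedComponent + G.edgeSet.ncard = Nat.card V := by
  induction hn : G.edgeSet.ncard generalizing G with
  | zero =>
    rw [Set.ncard_eq_zero, edgeSet_eq_empty] at hn
    subst hn
    refine Nat.card_eq_of_bijective _ ⟨fun x y hxy => ?_, Quot.mk_surjective⟩ |>.symm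
    exact reachable_bot.1 (ConnectedComponent.exact hxy)
  | succ n ih =>
    obtain ⟨e, he⟩ := Set.nonempty_of_ncard_ne_zero (by rw [hn]; exact n.succ_ne_zero)
    induction e using Sym2.ind with | _ a b => ?_
    have hcard : (G.deleteEdges {s(a, b)}).edgeSet.ncard = n := by
      rw [edgeSet_deleteEdges, Set.ncard_sdiff_singleton_of_mem he, hn, Nat.add_sub_cancel]
    have := ih (hG.anti (deleteEdges_le _)) hcard
    rw [IsBridge.card_connectedComponent_deleteEdges he (isAcyclic_iff_forall_isBridge.1 hG he)]
      at this
    omega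

lemma IsTree.of_isAcyclic_of_ncard_edgeSet_eq [Finite V] {T T' : SimpleGraph V} (hT : T.IsTree)
    (hT' : T'.IsAcyclic) (h : T'.edgeSet.ncard = T.edgeSet.ncard) : T'.IsTree := by
  have : Nonempty V := hT.connected.nonempty
  have : Subsingleton T.ConnectedComponent :=
    hT.connected.preconnected.subsingleton_connectedComponent
  have hone : Nat.card T'.ConnectedComponent = 1 := by
    have := hT.isAcyclic.card_connectedComponent_add_ncard_edgeSet
    have := hT'.card_connectedComponent_add_ncard_edgeSet
    have : Nat.card T.ConnectedComponent = 1 := Nat.card_unique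
    omega
  have : Subsingleton T'.ConnectedComponent := (Nat.card_eq_one_iff_unique.1 hone).1
  refine ⟨(connected_iff _).2 ⟨fun u v => ?_, ‹_›⟩, hT'⟩
  exact ConnectedComponent.exact (Subsingleton.elim _ _)

lemma IsAcyclic.not_reachable_deleteEdges_of_mem_edges (hG : G.IsAcyclic) {u v : V}
    {p : G.Walk u v} (hp : p.IsPath) {e : Sym2 V} (he : e ∈ p.edges) :
    ¬ (G.deleteEdges {e}).Reachable u v := by
  classical
  rintro ⟨r⟩
  have hle : G.deleteEdges {e} ≤ G := deleteEdges_le _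
  have hpr : p = r.bypass.mapLe hle :=
    congrArg Subtype.val <|
      (hG.subsingleton_path u v).elim ⟨p, hp⟩ ⟨_, r.bypass_isPath.mapLe hle⟩
  have := (r.bypass.edges_subset_edgeSet (by rwa [hpr, Walk.edges_mapLe_eq_edges] at he))
  simp [edgeSet_deleteEdges] at this

end SimpleGraph

open SimpleGraph

theorem IsMaxSpanningTree.weight_le_of_mem_edges {V : Type*} [Finite V] {G T : SimpleGraph V}
    {w : Sym2 V → ℝ} (hT : IsMaxSpanningTree G w T) {u v : V} (huv : G.Adj u v)
    (huvT : ¬ T.Adj u v) {p : T.Walk u v} (hp : p.IsPath) {e : Sym2 V} (he : e ∈ p.edges) :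
    w s(u, v) ≤ w e := by
  obtain ⟨hTG, hTtree, hTmax⟩ := hT
  have heT : e ∈ T.edgeSet := p.edges_subset_edgeSet he
  have huvT' : s(u, v) ∉ T.edgeSet \ {e} := fun h => huvT h.1
  set T' := T.deleteEdges {e} ⊔ edge u v
  have hT'edges : T'.edgeSet = insert s(u, v) (T.edgeSet \ {e}) := by
    rw [edgeSet_sup, edgeSet_deleteEdges, edgeSet_edge_of_ne huv.ne, Set.union_singleton]
  have hT'tree : T'.IsTree := by
    refine hTtree.of_isAcyclic_of_ncard_edgeSet_eq ?_ ?_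
    · exact (hTtree.isAcyclic.anti (deleteEdges_le _)).sup_edge_of_not_reachable
        (hTtree.isAcyclic.not_reachable_deleteEdges_of_mem_edges hp he)
    · rw [hT'edges, Set.ncard_insert_of_notMem huvT', Set.ncard_sdiff_singleton_add_one heT]
  have hT'G : T' ≤ G := sup_le ((deleteEdges_le _).trans hTG) ((edge_le_iff G).2 (.inr huv))
  have hsum := hTmax T' hT'G hT'tree
  rw [hT'edges, finsum_mem_insert _ huvT' (Set.toFinite _), ← Set.insert_sdiff_self_of_mem heT,
    finsum_mem_insert _ (fun h => h.2 rfl) (Set.toFinite _),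
    Set.insert_sdiff_self_of_mem heT] at hsum
  linarith

section Threshold

variable {q : ℕ} {H T : SimpleGraph (Fin q)} {w : Sym2 (Fin q) → ℝ} {ε : ℝ}

@[simp]
lemma mem_edgeSet_thresholdOf {e : Sym2 (Fin q)} :
    e ∈ (thresholdOf H w ε).edgeSet ↔ e ∈ H.edgeSet ∧ ε < w e := by
  induction e using Sym2.ind
  exact Iff.rfl

lemma thresholdOf_mono (h : T ≤ H) : thresholdOf T w ε ≤ thresholdOf H w ε :=
  fun _ _ hxy => ⟨h hxy.1, hxy.2⟩

lemma thresholdOf_le : thresholdOf H w ε ≤ H := fun _ _ hxy => hxy.1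

lemma IsMaxSpanningTree.reachable_thresholdOf (hT : IsMaxSpanningTree H w T) :
    (thresholdOf H w ε).Reachable = (thresholdOf T w ε).Reachable := by
  ext x y
  refine ⟨Reachable.of_forall_adj_reachable fun x y hxy => ?_,
    Reachable.mono (thresholdOf_mono hT.1)⟩
  obtain ⟨hxy, hw⟩ : H.Adj x y ∧ ε < w s(x, y) := hxy
  by_cases hxyT : T.Adj x y
  · exact Adj.reachable ⟨hxyT, hw⟩
  obtain ⟨p, hp, -⟩ := hT.2.1.existsUnique_path x y
  refine ⟨p.transfer _ fun e he => mem_edgeSet_thresholdOf.2 ⟨p.edges_subset_edgeSet he, ?_⟩⟩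
  exact hw.trans_le (hT.weight_le_of_mem_edges hxy hxyT hp he)

end Threshold

theorem betti1_eq_non_mst_edges_general (q : ℕ) (w : Sym2 (Fin q) → ℝ)
    (T : SimpleGraph (Fin q)) (hT : IsMaxSpanningTree ⊤ w T) :
    ∀ ε : ℝ, 0 ≤ ε →
      betti1 w ε =
        ({e : Sym2 (Fin q) | ¬ e.IsDiag ∧ e ∉ T.edgeSet ∧ ε < w e}.ncard : ℤ) := by
  intro ε _
  set M := {e : Sym2 (Fin q) | ¬ e.IsDiag ∧ e ∉ T.edgeSet ∧ ε < w e}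
  have hcomponents : betti0 w ε = Nat.card (thresholdOf T w ε).ConnectedComponent :=
    Nat.card_congr (Quot.congrRight fun x y => by rw [thresholdGraph, hT.reachable_thresholdOf])
  have hforest :
      Nat.card (thresholdOf T w ε).ConnectedComponent + (thresholdOf T w ε).edgeSet.ncard = q := by
    simpa using (hT.2.1.isAcyclic.anti thresholdOf_le).card_connectedComponent_add_ncard_edgeSet
  have hedges : (thresholdGraph w ε).edgeSet = (thresholdOf T w ε).edgeSet ∪ M := by
    ext e
    by_cases he : e ∈ T.edgeSet
    · simp [thresholdGraph, M, he, T.not_isDiag_of_mem_edgeSet he]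
    · simp [thresholdGraph, M, he]
  have hdisj : Disjoint (thresholdOf T w ε).edgeSet M :=
    Set.disjoint_left.2 fun e he heM => heM.2.1 (mem_edgeSet_thresholdOf.1 he).1
  rw [betti1, numEdges, hcomponents, hedges, Set.ncard_union_eq hdisj]
  omega

/-- **Betti-1 counts the non-tree edges above threshold.** For the complete graph on
`q ≥ 2` vertices with pairwise distinct positive edge weights and maximum spanning
tree `T`, for every `ε ≥ 0` the cycle rank `β₁(ε) = E(ε) − q + β₀(ε)` of the
threshold graph equals the number of edges of the complete graph outside `T` whose
weight exceeds `ε`. -/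
theorem betti1_eq_non_mst_edges (q : ℕ) (hq : 2 ≤ q) (w : Sym2 (Fin q) → ℝ)
    (hpos : ∀ e : Sym2 (Fin q), ¬ e.IsDiag → 0 < w e)
    (hinj : ∀ e f : Sym2 (Fin q), ¬ e.IsDiag → ¬ f.IsDiag → w e = w f → e = f)
    (T : SimpleGraph (Fin q)) (hT : IsMaxSpanningTree ⊤ w T) :
    ∀ ε : ℝ, 0 ≤ ε →
      betti1 w ε =
        ({e : Sym2 (Fin q) | ¬ e.IsDiag ∧ e ∉ T.edgeSet ∧ ε < w e}.ncard : ℤ) :=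
  betti1_eq_non_mst_edges_general q w T hT
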